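/- Consider the complete fan Σ in ℝ³ with eight maximal cones: σ' spanned by {d=(0,-2,-1), e=(-1,0,-2), f=(-2,-1,0)} and the seven cones obtained from the triangulation by a=(1,0,0), b=(0,1,0), c=(0,0,1) as in the paper's Figure 4(a) (cones σ₀,…,σ₆ on {a,b,c,d,e,f}). Then there is no strictly convex piecewise linear function on Σ: any piecewise linear function φ that is strictly convex across all pairs of adjacent maximal cones yields a contradiction; indeed strict convexity across σ₁,σ₄ and its cyclic analogues gives 3(φ(a)+φ(b)+φ(c))+φ(d)+φ(e)+φ(f) > 0, while strict convexity across σ₄,σ₂ and its analogues gives the opposite strict inequality. -/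
import Mathlib


/-- The polyhedral cone spanned by three vectors in `ℝ³`. -/
def coneOf3 (u v w : Fin 3 → ℝ) : Set (Fin 3 → ℝ) :=
  {x | ∃ r s t : ℝ, 0 ≤ r ∧ 0 ≤ s ∧ 0 ≤ t ∧ x = r • u + s • v + t • w}

def vA : Fin 3 → ℝ := ![1, 0, 0]
def vB : Fin 3 → ℝ := ![0, 1, 0]
def vC : Fin 3 → ℝ := ![0, 0, 1]
def vD : Fin 3 → ℝ := ![0, -2, -1]
def vE : Fin 3 → ℝ := ![-1, 0, -2]
def vF : Fin 3 → ℝ := ![-2, -1, 0]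

/-- The eight maximal cones of the complete fan of the paper's Figure 4(a):
`σ' = cone(d,e,f)` together with the seven cones `cone(a,b,c)`, `cone(a,c,f)`,
`cone(a,b,d)`, `cone(b,c,e)`, `cone(a,d,f)`, `cone(b,d,e)`, `cone(c,e,f)`. -/
def jurkiewiczFan : Set (Set (Fin 3 → ℝ)) :=
  {coneOf3 vD vE vF, coneOf3 vA vB vC, coneOf3 vA vC vF, coneOf3 vA vB vD,
   coneOf3 vB vC vE, coneOf3 vA vD vF, coneOf3 vB vD vE, coneOf3 vC vE vF}

lemma mem_fst (u v w : Fin 3 → ℝ) : u ∈ coneOf3 u v w :=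
  ⟨1, 0, 0, zero_le_one, le_refl 0, le_refl 0, by simp⟩
lemma mem_snd (u v w : Fin 3 → ℝ) : v ∈ coneOf3 u v w :=
  ⟨0, 1, 0, le_refl 0, zero_le_one, le_refl 0, by simp⟩
lemma mem_trd (u v w : Fin 3 → ℝ) : w ∈ coneOf3 u v w :=
  ⟨0, 0, 1, le_refl 0, le_refl 0, zero_le_one, by simp⟩

/-- There is no strictly convex piecewise linear function on the complete
fan `Σ` of Figure 4(a): if `φ : ℝ³ → ℝ` is linear on each maximal cone `σ` of the fan,
via a linear functional `ℓ_σ` agreeing with `φ` on `σ` and strictly exceeding `φ`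
outside `σ` (strict convexity across all pairs of adjacent maximal cones), then we get
a contradiction; indeed strict convexity across `σ₁, σ₄` and its cyclic analogues gives
`3(φ(a)+φ(b)+φ(c)) + φ(d)+φ(e)+φ(f) > 0`, while strict convexity across `σ₄, σ₂` and
its analogues gives the opposite strict inequality. -/
theorem no_strictly_convex_support_function
    (φ : (Fin 3 → ℝ) → ℝ)
    (hconv : ∀ σ ∈ jurkiewiczFan, ∃ ℓ : (Fin 3 → ℝ) →ₗ[ℝ] ℝ,
      (∀ x ∈ σ, φ x = ℓ x) ∧ (∀ x ∉ σ, φ x < ℓ x)) :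
    False := by
  obtain ⟨l1, h1e, h1l⟩ := hconv (coneOf3 vA vC vF) (by simp [jurkiewiczFan])
  obtain ⟨l2, h2e, h2l⟩ := hconv (coneOf3 vA vB vD) (by simp [jurkiewiczFan])
  obtain ⟨l3, h3e, h3l⟩ := hconv (coneOf3 vB vC vE) (by simp [jurkiewiczFan])
  obtain ⟨l4, h4e, h4l⟩ := hconv (coneOf3 vA vD vF) (by simp [jurkiewiczFan])
  obtain ⟨l5, h5e, h5l⟩ := hconv (coneOf3 vB vD vE) (by simp [jurkiewiczFan])
  obtain ⟨l6, h6e, h6l⟩ := hconv (coneOf3 vC vE vF) (by simp [jurkiewiczFan])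
  -- non-membership facts
  have nd1 : vD ∉ coneOf3 vA vC vF := by
    rintro ⟨r, s, t, hr, hs, ht, hx⟩
    have h := congrFun hx 2
    simp [vA, vC, vF, vD] at h; linarith
  have ne2 : vE ∉ coneOf3 vA vB vD := by
    rintro ⟨r, s, t, hr, hs, ht, hx⟩
    have h := congrFun hx 0
    simp [vA, vB, vD, vE] at h; linarith
  have nf3 : vF ∉ coneOf3 vB vC vE := by
    rintro ⟨r, s, t, hr, hs, ht, hx⟩
    have h := congrFun hx 1
    simp [vB, vC, vE, vF] at h; linarith
  have nb4 : vB ∉ coneOf3 vA vD vF := by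
    rintro ⟨r, s, t, hr, hs, ht, hx⟩
    have h2 := congrFun hx 2
    have h1 := congrFun hx 1
    simp [vA, vD, vF, vB] at h1 h2; linarith
  have nc5 : vC ∉ coneOf3 vB vD vE := by
    rintro ⟨r, s, t, hr, hs, ht, hx⟩
    have h0 := congrFun hx 0
    have h2 := congrFun hx 2
    simp [vB, vD, vE, vC] at h0 h2; linarith
  have na6 : vA ∉ coneOf3 vC vE vF := by
    rintro ⟨r, s, t, hr, hs, ht, hx⟩
    have h1 := congrFun hx 1
    have h0 := congrFun hx 0
    simp [vC, vE, vF, vA] at h0 h1; linarith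
  -- linear combination identities
  have eD : vD = (4:ℝ) • vA + ((-1:ℝ) • vC + (2:ℝ) • vF) := by
    funext i; fin_cases i <;> simp [vA, vC, vF, vD] <;> norm_num
  have eE : vE = (-1:ℝ) • vA + ((4:ℝ) • vB + (2:ℝ) • vD) := by
    funext i; fin_cases i <;> simp [vA, vB, vD, vE] <;> norm_num
  have eF : vF = (-1:ℝ) • vB + ((4:ℝ) • vC + (2:ℝ) • vE) := by
    funext i; fin_cases i <;> simp [vB, vC, vE, vF] <;> norm_num
  have eB : vB = (-2:ℝ) • vA + ((0:ℝ) • vD + (-1:ℝ) • vF) := by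
    funext i; fin_cases i <;> simp [vA, vD, vF, vB] <;> norm_num
  have eC : vC = (-2:ℝ) • vB + ((-1:ℝ) • vD + (0:ℝ) • vE) := by
    funext i; fin_cases i <;> simp [vB, vD, vE, vC] <;> norm_num
  have eA : vA = (-2:ℝ) • vC + ((-1:ℝ) • vE + (0:ℝ) • vF) := by
    funext i; fin_cases i <;> simp [vC, vE, vF, vA] <;> norm_num
  -- the six strict inequalities
  have i1 : φ vD < 4 * φ vA + (-1 * φ vC + 2 * φ vF) := by
    have := h1l vD nd1
    rw [eD, map_add, map_add, map_smul, map_smul, map_smul, smul_eq_mul, smul_eq_mul,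
      smul_eq_mul, ← h1e vA (mem_fst ..), ← h1e vC (mem_snd ..), ← h1e vF (mem_trd ..)] at this
    rw [← eD] at this; exact this
  have i2 : φ vE < -1 * φ vA + (4 * φ vB + 2 * φ vD) := by
    have := h2l vE ne2
    rw [eE, map_add, map_add, map_smul, map_smul, map_smul, smul_eq_mul, smul_eq_mul,
      smul_eq_mul, ← h2e vA (mem_fst ..), ← h2e vB (mem_snd ..), ← h2e vD (mem_trd ..)] at this
    rw [← eE] at this; exact this
  have i3 : φ vF < -1 * φ vB + (4 * φ vC + 2 * φ vE) := by
    have := h3l vF nf3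
    rw [eF, map_add, map_add, map_smul, map_smul, map_smul, smul_eq_mul, smul_eq_mul,
      smul_eq_mul, ← h3e vB (mem_fst ..), ← h3e vC (mem_snd ..), ← h3e vE (mem_trd ..)] at this
    rw [← eF] at this; exact this
  have i4 : φ vB < -2 * φ vA + (0 * φ vD + -1 * φ vF) := by
    have := h4l vB nb4
    rw [eB, map_add, map_add, map_smul, map_smul, map_smul, smul_eq_mul, smul_eq_mul,
      smul_eq_mul, ← h4e vA (mem_fst ..), ← h4e vD (mem_snd ..), ← h4e vF (mem_trd ..)] at this
    rw [← eB] at this; exact this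
  have i5 : φ vC < -2 * φ vB + (-1 * φ vD + 0 * φ vE) := by
    have := h5l vC nc5
    rw [eC, map_add, map_add, map_smul, map_smul, map_smul, smul_eq_mul, smul_eq_mul,
      smul_eq_mul, ← h5e vB (mem_fst ..), ← h5e vD (mem_snd ..), ← h5e vE (mem_trd ..)] at this
    rw [← eC] at this; exact this
  have i6 : φ vA < -2 * φ vC + (-1 * φ vE + 0 * φ vF) := by
    have := h6l vA na6
    rw [eA, map_add, map_add, map_smul, map_smul, map_smul, smul_eq_mul, smul_eq_mul,
      smul_eq_mul, ← h6e vC (mem_fst ..), ← h6e vE (mem_snd ..), ← h6e vF (mem_trd ..)] at this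
    rw [← eA] at this; exact this
  linarith
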